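/- For the non-Markovian absorbing diffusion with independent masking probabilities α_t,...,α_T, the mutual information between the suffix trajectory and the clean data satisfies I(x_{t:T}; x_0) = H(x_0)·(1 - ∏_{τ=t}^{T} α_τ). -/
import Mathlib


open Finset

/-- Shannon entropy of a finitely supported weight function (natural log). -/
noncomputable def entropy {X : Type*} [Fintype X] (q : X → ℝ) : ℝ :=
  -∑ x, q x * Real.log (q x)

/-- For the non-Markovian absorbing diffusion with independent masking probabilities
`α i`, the mutual information `I(x_{t:T}; x_0) = H(x_0) - H(x_0 | x_{t:T})`
(with `H(x_0 | x_{t:T}) = H(x_0, x_{t:T}) - H(x_{t:T})`) equals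
`H(x_0) · (1 - ∏ i, α i)`. -/
theorem nonmarkov_absorbing_mutual_information
    {V : Type*} [Fintype V] [DecidableEq V] (n : ℕ)
    (p : V → ℝ) (hp : ∀ v, 0 ≤ p v) (hsum : ∑ v, p v = 1)
    (α : Fin n → ℝ) (hα : ∀ i, 0 ≤ α i ∧ α i ≤ 1)
    (joint : V × (Fin n → Option V) → ℝ)
    (hjoint : ∀ v f, joint (v, f) =
      p v * ∏ i, (match f i with
        | none => α i
        | some w => if w = v then 1 - α i else 0))
    (marg : (Fin n → Option V) → ℝ)
    (hmarg : ∀ f, marg f = ∑ v, joint (v, f)) :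
    entropy p - (entropy joint - entropy marg) = entropy p * (1 - ∏ i, α i) := by
  classical
  set c : ℝ := ∏ i, α i with hc
  set a : Fin n → Option V := fun _ => none with ha
  -- joint at the all-none trajectory
  have hja : ∀ v, joint (v, a) = p v * c := by
    intro v
    rw [hjoint]
  -- marginal at the all-none trajectory
  have hma : marg a = c := by
    rw [hmarg]
    simp only [hja]
    rw [← Finset.sum_mul, hsum, one_mul]
  -- key: for f ≠ a, at most one v contributes
  have hL4 : ∀ f, f ≠ a → marg f * Real.log (marg f)
      = ∑ v, joint (v, f) * Real.log (joint (v, f)) := by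
    intro f hf
    obtain ⟨i0, hi0⟩ : ∃ i, f i ≠ none := by
      by_contra h
      push_neg at h
      exact hf (funext h)
    obtain ⟨v0, hv0⟩ := Option.ne_none_iff_exists'.mp hi0
    have hzero : ∀ v, v ≠ v0 → joint (v, f) = 0 := by
      intro v hv
      rw [hjoint]
      have : (∏ i, (match f i with
          | none => α i
          | some w => if w = v then 1 - α i else 0)) = 0 := by
        apply Finset.prod_eq_zero (Finset.mem_univ i0)
        rw [hv0]
        simp [Ne.symm hv]
      rw [this, mul_zero]
    have hm : marg f = joint (v0, f) := by
      rw [hmarg]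
      exact Finset.sum_eq_single v0 (fun v _ hv => hzero v hv)
        (fun h => absurd (Finset.mem_univ v0) h)
    rw [hm]
    symm
    exact Finset.sum_eq_single v0
      (fun v _ hv => by rw [hzero v hv]; simp)
      (fun h => absurd (Finset.mem_univ v0) h)
    -- summed log-product identity
  have hL1 : ∑ v, p v * c * Real.log (p v * c)
      = c * (∑ v, p v * Real.log (p v)) + c * Real.log c := by
    have key : ∀ v, p v * c * Real.log (p v * c)
        = c * (p v * Real.log (p v)) + p v * (c * Real.log c) := by
      intro v
      by_cases h1 : p v = 0
      · simp [h1]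
      by_cases h2 : c = 0
      · simp [h2]
      rw [Real.log_mul h1 h2]; ring
    rw [Finset.sum_congr rfl (fun v _ => key v), Finset.sum_add_distrib,
      ← Finset.mul_sum, ← Finset.sum_mul, hsum, one_mul]
  set S : ℝ := ∑ f, ∑ v, joint (v, f) * Real.log (joint (v, f)) with hS
  have hJ : entropy joint = -S := by
    rw [entropy, hS, Fintype.sum_prod_type, Finset.sum_comm]
  have hsplit : ∑ f, marg f * Real.log (marg f)
      = marg a * Real.log (marg a)
        + ∑ f ∈ Finset.univ.erase a, marg f * Real.log (marg f) := by
    exact (Finset.add_sum_erase _ (fun f => marg f * Real.log (marg f))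
      (Finset.mem_univ a)).symm
  have hMerase : ∑ f ∈ Finset.univ.erase a, marg f * Real.log (marg f)
      = S - ∑ v, joint (v, a) * Real.log (joint (v, a)) := by
    rw [Finset.sum_congr rfl (fun f hf => hL4 f (Finset.ne_of_mem_erase hf))]
    have := Finset.add_sum_erase Finset.univ
      (fun f => ∑ v, joint (v, f) * Real.log (joint (v, f))) (Finset.mem_univ a)
    rw [hS, ← this]
    ring
  have hja' : ∑ v, joint (v, a) * Real.log (joint (v, a))
      = c * (∑ v, p v * Real.log (p v)) + c * Real.log c := by
    simp only [hja]; exact hL1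
  have hTm : entropy marg = -S + c * (∑ v, p v * Real.log (p v)) := by
    rw [entropy, hsplit, hMerase, hma, hja']
    ring
  rw [hJ, hTm, entropy]
  ring
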